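/- Let p ∈ ℕ with p ≥ 1, ω > 0, and θ ∈ 𝒮(p,ω). Suppose ψ ∈ ℬ𝒫𝒞(θ) is an unpredictable function with values in ℝ^m, with unpredictability constant ε₀ > 0, number ν > 0 and sequences {μ_n}_{n∈ℕ}, {τ_n}_{n∈ℕ} both diverging to +∞ satisfying conditions (i)–(iii). Then for every c ∈ ℝ^m and every non-singular matrix Ω ∈ ℝ^{m×m}, the function ψ̃ defined by ψ̃(t) = Ωψ(t) + c belongs to ℬ𝒫𝒞(θ) and is unpredictable with the same ν and the same sequences {μ_n}, {τ_n}, and with unpredictability constant ε₀/‖Ω⁻¹‖, where ‖·‖ denotes the spectral norm. -/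

import Mathlib

open Filter Topology

noncomputable section

/-- `𝒮(p,ω)`: strictly increasing sequences `θ : ℤ → ℝ` with `|θ k| → ∞` as `|k| → ∞`
and `θ (k+p) = θ k + ω` for all `k`. -/
def SSeq (p : ℕ) (ω : ℝ) (θ : ℤ → ℝ) : Prop :=
  StrictMono θ ∧ Tendsto (fun k : ℤ => |θ k|) (cocompact ℤ) atTop ∧
    ∀ k : ℤ, θ (k + (p : ℤ)) = θ k + ω

/-- `ℬ𝒫𝒞(θ)`: bounded, continuous on each `(θ (k-1), θ k)`, right limits exist at each
`θ k`, and left-continuous at each `θ k`. -/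
def BPC (m : ℕ) (θ : ℤ → ℝ) (φ : ℝ → EuclideanSpace ℝ (Fin m)) : Prop :=
  (∃ M : ℝ, ∀ t : ℝ, ‖φ t‖ ≤ M) ∧
  (∀ k : ℤ, ContinuousOn φ (Set.Ioo (θ (k - 1)) (θ k))) ∧
  (∀ k : ℤ, ∃ L : EuclideanSpace ℝ (Fin m), Tendsto φ (nhdsWithin (θ k) (Set.Ioi (θ k))) (nhds L)) ∧
  (∀ k : ℤ, Tendsto φ (nhdsWithin (θ k) (Set.Iio (θ k))) (nhds (φ (θ k))))

/-- Conditions (i)–(iii) of Definition 2.1 with explicit data `ε₀, ν, μ, τ`. -/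
def UnpredictableWith (m : ℕ) (θ : ℤ → ℝ) (ψ : ℝ → EuclideanSpace ℝ (Fin m))
    (ε₀ ν : ℝ) (μ τ : ℕ → ℝ) : Prop :=
  0 < ε₀ ∧ 0 < ν ∧ Tendsto μ atTop atTop ∧ Tendsto τ atTop atTop ∧
  (∀ ε > (0 : ℝ), ∃ δ > (0 : ℝ), ∀ k : ℤ, ∀ s₁ ∈ Set.Ioo (θ (k - 1)) (θ k),
    ∀ s₂ ∈ Set.Ioo (θ (k - 1)) (θ k), |s₁ - s₂| < δ → ‖ψ s₁ - ψ s₂‖ < ε) ∧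
  (∀ C : Set ℝ, IsCompact C →
    TendstoUniformlyOn (fun n t => ψ (t + μ n)) ψ atTop C) ∧
  (∀ n : ℕ, ∀ t ∈ Set.Icc (τ n - ν) (τ n + ν), ε₀ ≤ ‖ψ (t + μ n) - ψ t‖)

/-- An unpredictable function in `ℬ𝒫𝒞(θ)`. -/
def Unpredictable (m : ℕ) (θ : ℤ → ℝ) (ψ : ℝ → EuclideanSpace ℝ (Fin m)) : Prop :=
  BPC m θ ψ ∧ ∃ ε₀ ν : ℝ, ∃ μ τ : ℕ → ℝ, UnpredictableWith m θ ψ ε₀ ν μ τ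

/-- An asymptotically unpredictable function in `ℬ𝒫𝒞(θ)`. -/
def AsympUnpredictable (m : ℕ) (θ : ℤ → ℝ) (φ : ℝ → EuclideanSpace ℝ (Fin m)) : Prop :=
  BPC m θ φ ∧ ∃ ψ ξ : ℝ → EuclideanSpace ℝ (Fin m),
    Unpredictable m θ ψ ∧ BPC m θ ξ ∧
    Tendsto (fun t => ‖ξ t‖) atTop (nhds (0 : ℝ)) ∧ ∀ t : ℝ, φ t = ψ t + ξ t

/-! The map `x ↦ Ω x + c` is continuous, uniformly continuous and, having the `‖Ω⁻¹‖`-Lipschitz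
left inverse `y ↦ Ω⁻¹ (y - c)`, antilipschitz with constant `‖Ω⁻¹‖`. Continuity preserves
membership in `ℬ𝒫𝒞(θ)` (bounded sets of `ℝ^m` are relatively compact), uniform continuity
preserves conditions (i) and (ii), and the antilipschitz bound turns the separation `ε₀` of (iii)
into `ε₀ / ‖Ω⁻¹‖`. -/

open scoped NNReal

section Composition

variable {m : ℕ} {θ : ℤ → ℝ} {f : EuclideanSpace ℝ (Fin m) → EuclideanSpace ℝ (Fin m)}

theorem BPC.comp {φ : ℝ → EuclideanSpace ℝ (Fin m)} (hφ : BPC m θ φ) (hf : Continuous f) :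
    BPC m θ (f ∘ φ) := by
  obtain ⟨⟨M, hM⟩, hcont, hright, hleft⟩ := hφ
  refine ⟨?_, fun k => hf.comp_continuousOn (hcont k), fun k => ?_,
    fun k => (hf.tendsto _).comp (hleft k)⟩
  · have hrange : Bornology.IsBounded (Set.range φ) :=
      isBounded_iff_forall_norm_le.2 ⟨M, Set.forall_mem_range.2 hM⟩
    obtain ⟨M', hM'⟩ := isBounded_iff_forall_norm_le.1
      ((hrange.isCompact_closure.image hf).isBounded)
    exact ⟨M', fun t => hM' _ ⟨φ t, subset_closure ⟨t, rfl⟩, rfl⟩⟩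
  · obtain ⟨L, hL⟩ := hright k
    exact ⟨f L, (hf.tendsto L).comp hL⟩

theorem UnpredictableWith.comp {ψ : ℝ → EuclideanSpace ℝ (Fin m)} {ε₀ ν : ℝ} {μ τ : ℕ → ℝ}
    {K : ℝ≥0} (hψ : UnpredictableWith m θ ψ ε₀ ν μ τ) (hf : UniformContinuous f)
    (hK : AntilipschitzWith K f) :
    UnpredictableWith m θ (f ∘ ψ) (ε₀ / K) ν μ τ := by
  obtain ⟨hε₀, hν, hμ, hτ, hpiece, hunif, hsep⟩ := hψ
  have hsep' : ∀ n, ∀ t ∈ Set.Icc (τ n - ν) (τ n + ν),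
      ε₀ ≤ K * ‖f (ψ (t + μ n)) - f (ψ t)‖ := fun n t ht => by
    simpa only [← dist_eq_norm] using (hsep n t ht).trans (hK.le_mul_dist _ _)
  have hKpos : 0 < (K : ℝ) := by
    have h := hsep' 0 (τ 0) ⟨by linarith, by linarith⟩
    exact pos_of_mul_pos_left (hε₀.trans_le h) (norm_nonneg _)
  refine ⟨div_pos hε₀ hKpos, hν, hμ, hτ, fun ε hε => ?_, fun C hC => hf.comp_tendstoUniformlyOn
    (hunif C hC), fun n t ht => (div_le_iff₀' hKpos).2 (hsep' n t ht)⟩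
  obtain ⟨η, hη, hfη⟩ := Metric.uniformContinuous_iff.1 hf ε hε
  obtain ⟨δ, hδ, hψδ⟩ := hpiece η hη
  refine ⟨δ, hδ, fun k s₁ hs₁ s₂ hs₂ hs => ?_⟩
  simpa only [Function.comp_apply, ← dist_eq_norm] using
    hfη (by simpa only [dist_eq_norm] using hψδ k s₁ hs₁ s₂ hs₂ hs)

end Composition

theorem antilipschitzWith_affine_of_leftInverse {E F : Type*} [SeminormedAddCommGroup E]
    [SeminormedAddCommGroup F] [NormedSpace ℝ E] [NormedSpace ℝ F] {A : E →L[ℝ] F}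
    {B : F →L[ℝ] E} (hBA : ∀ x, B (A x) = x) (c : F) :
    AntilipschitzWith ‖B‖₊ (fun x => A x + c) :=
  .of_le_mul_dist fun x y => by
    simpa only [hBA, dist_add_right, coe_nnnorm] using B.lipschitz.dist_le_mul (A x) (A y)

theorem toEuclideanCLM_inv_apply_toEuclideanCLM_apply {m : ℕ} {Ω : Matrix (Fin m) (Fin m) ℝ}
    (hΩ : IsUnit Ω) (x : EuclideanSpace ℝ (Fin m)) :
    Matrix.toEuclideanCLM (𝕜 := ℝ) Ω⁻¹ (Matrix.toEuclideanCLM (𝕜 := ℝ) Ω x) = x := by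
  have h : Ω⁻¹ * Ω = 1 := Matrix.nonsing_inv_mul Ω ((Matrix.isUnit_iff_isUnit_det Ω).1 hΩ)
  simpa [map_mul] using congrArg (fun M => Matrix.toEuclideanCLM (𝕜 := ℝ) M x) h

theorem statement1_general (m : ℕ) (θ : ℤ → ℝ)
    (ψ : ℝ → EuclideanSpace ℝ (Fin m)) (hψBPC : BPC m θ ψ)
    (ε₀ ν : ℝ) (μ τ : ℕ → ℝ) (hψ : UnpredictableWith m θ ψ ε₀ ν μ τ)
    (c : EuclideanSpace ℝ (Fin m)) (Ω : Matrix (Fin m) (Fin m) ℝ) (hΩ : IsUnit Ω) :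
    BPC m θ (fun t => Matrix.toEuclideanCLM (𝕜 := ℝ) Ω (ψ t) + c) ∧
    UnpredictableWith m θ (fun t => Matrix.toEuclideanCLM (𝕜 := ℝ) Ω (ψ t) + c)
      (ε₀ / ‖Matrix.toEuclideanCLM (𝕜 := ℝ) Ω⁻¹‖) ν μ τ := by
  set A := Matrix.toEuclideanCLM (𝕜 := ℝ) Ω
  have hunif : UniformContinuous fun x => A x + c :=
    A.uniformContinuous.add uniformContinuous_const
  have hanti := antilipschitzWith_affine_of_leftInverse
    (toEuclideanCLM_inv_apply_toEuclideanCLM_apply hΩ) c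
  have hunpred := hψ.comp hunif hanti
  rw [coe_nnnorm] at hunpred
  have hBPC := hψBPC.comp hunif.continuous
  exact ⟨hBPC, hunpred⟩

/-- if `ψ ∈ ℬ𝒫𝒞(θ)` is unpredictable with data `ε₀, ν, μ, τ`, then for every
vector `c` and non-singular matrix `Ω`, the function `t ↦ Ω ψ t + c` belongs to `ℬ𝒫𝒞(θ)` and
is unpredictable with the same `ν, μ, τ` and unpredictability constant `ε₀ / ‖Ω⁻¹‖`
(spectral norm). -/
theorem statement1 (m p : ℕ) (hp : 1 ≤ p) (ω : ℝ) (hω : 0 < ω) (θ : ℤ → ℝ)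
    (hθ : SSeq p ω θ) (ψ : ℝ → EuclideanSpace ℝ (Fin m)) (hψBPC : BPC m θ ψ)
    (ε₀ ν : ℝ) (μ τ : ℕ → ℝ) (hψ : UnpredictableWith m θ ψ ε₀ ν μ τ)
    (c : EuclideanSpace ℝ (Fin m)) (Ω : Matrix (Fin m) (Fin m) ℝ) (hΩ : IsUnit Ω) :
    BPC m θ (fun t => Matrix.toEuclideanCLM (𝕜 := ℝ) Ω (ψ t) + c) ∧
    UnpredictableWith m θ (fun t => Matrix.toEuclideanCLM (𝕜 := ℝ) Ω (ψ t) + c)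
      (ε₀ / ‖Matrix.toEuclideanCLM (𝕜 := ℝ) Ω⁻¹‖) ν μ τ :=
  statement1_general m θ ψ hψBPC ε₀ ν μ τ hψ c Ω hΩ
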